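/- arXiv:2407.18734 — 12 statements merged into one kernel-verified Lean document; each statement's English description precedes it below -/
import Mathlib

section
/- Let (A,·) be a unital associative algebra over a field K. A bilinear associative product * on A is id-matching with · if and only if * is a mutation of ·, i.e. there exists c ∈ A such that a*b = a·c·b for all a,b ∈ A (one may take c = 1*1). -/
/-- For a unital associative algebra `(A, ·)` over a field `K`, a bilinear associative
product `*` on `A` is id-matching with `·` if and only if it is a mutation of `·`,
i.e. there is `c ∈ A` with `a * b = a·c·b` for all `a, b ∈ A`. -/
theorem id_matching_iff_mutation_of_unital {K A : Type*} [Field K] [Ring A] [Algebra K A]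
    (star : A →ₗ[K] A →ₗ[K] A)
    (hassoc : ∀ a b c : A, star (star a b) c = star a (star b c)) :
    ((∀ a b c : A, star a b * c = star a (b * c)) ∧
      (∀ a b c : A, star (a * b) c = a * star b c)) ↔
    ∃ c : A, ∀ a b : A, star a b = a * c * b := by
  constructor
  · rintro ⟨h1, h2⟩
    refine ⟨star 1 1, fun a b => ?_⟩
    have : star a b = a * star 1 b := by
      have := h2 a 1 b; simpa using this
    rw [this]
    have : star 1 b = star 1 1 * b := by
      have := h1 1 1 b; simpa using this.symm
    rw [this, mul_assoc]
  · rintro ⟨c, hc⟩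
    constructor
    · intro a b d; simp [hc, mul_assoc]
    · intro a b d; simp [hc, mul_assoc]
end

section
/- Let (A,·) be a (not necessarily associative) algebra over a field K and let φ be an element of the centroid Γ(A). Then the product a *_φ b := φ(a·b) is interchangeable with ·. Moreover, if · is associative, then *_φ is associative and totally compatible with ·. -/
/-- For a (not necessarily associative) algebra `(A, ·)` over a field `K` and an element
`φ` of the centroid of `A`, the product `a *_φ b = φ (a·b)` is interchangeable with `·`;
moreover, if `·` is associative, then `*_φ` is associative and totally compatible
with `·`. -/
theorem centroid_product_interchangeable {K A : Type*} [Field K] [NonUnitalNonAssocRing A]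
    [Module K A] [SMulCommClass K A A] [IsScalarTower K A A]
    (φ : A →ₗ[K] A) (hφ : ∀ x y : A, x * φ y = φ (x * y) ∧ φ (x * y) = φ x * y) :
    ((∀ a b c : A, φ (a * b) * c = φ ((a * b) * c)) ∧
      (∀ a b c : A, φ (a * (b * c)) = a * φ (b * c))) ∧
    ((∀ a b c : A, (a * b) * c = a * (b * c)) →
      (∀ a b c : A, φ (φ (a * b) * c) = φ (a * φ (b * c))) ∧
      (∀ a b c : A, φ (a * b) * c = φ ((a * b) * c) ∧
        φ ((a * b) * c) = φ (a * (b * c)) ∧ φ (a * (b * c)) = a * φ (b * c))) := by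
  refine ⟨⟨fun a b c => ((hφ (a*b) c).2).symm, fun a b c => ((hφ a (b*c)).1).symm⟩,
    fun hassoc => ⟨fun a b c => ?_, fun a b c =>
      ⟨((hφ (a*b) c).2).symm, by rw [hassoc], ((hφ a (b*c)).1).symm⟩⟩⟩
  exact congrArg φ (by rw [← (hφ (a*b) c).2, hassoc, ← (hφ a (b*c)).1])
end

section
/- Let (A,·) be a unital associative algebra over a field K and let x ∈ A be a non-central element (i.e. x·y ≠ y·x for some y ∈ A). Then the mutation product a ·ₓ b = a·x·b is associative and id-matching with ·, but it is not totally compatible with ·. In particular, on any non-commutative unital associative K-algebra there exists a product that is id-matching but not totally compatible with ·. -/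
/-- For a unital associative algebra `(A, ·)` over a field `K` and a non-central element
`x ∈ A`, the mutation `a ·ₓ b = a·x·b` is associative and id-matching with `·`, but not
totally compatible with `·`. -/
theorem mutation_by_noncentral_not_totally_compatible {K A : Type*} [Field K] [Ring A]
    [Algebra K A] (x : A) (hx : ∃ y : A, x * y ≠ y * x) :
    (∀ a b c : A, (a * x * b) * x * c = a * x * (b * x * c)) ∧
    ((∀ a b c : A, (a * x * b) * c = a * x * (b * c)) ∧
      (∀ a b c : A, (a * b) * x * c = a * (b * x * c))) ∧
    ¬ (∀ a b c : A, (a * x * b) * c = (a * b) * x * c ∧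
        (a * b) * x * c = a * x * (b * c) ∧ a * x * (b * c) = a * (b * x * c)) := by
  obtain ⟨y, hy⟩ := hx
  refine ⟨fun a b c => by noncomm_ring, ⟨fun a b c => by noncomm_ring, fun a b c => by noncomm_ring⟩, fun h => ?_⟩
  have := (h 1 y 1).1
  simp only [one_mul, mul_one] at this
  exact hy this
end

section
/- Let (A,·) be an idempotent associative algebra over a field K, i.e. every element of A is a finite sum of products a·b (A·A = A). Then an associative bilinear product * on A is interchangeable with · if and only if it is totally compatible with ·. -/
/-- For an idempotent associative algebra `(A, ·)` over a field `K` (i.e. `A·A = A`)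
and an associative bilinear product `*` on `A`, `*` is interchangeable with `·` if and
only if `*` is totally compatible with `·`. -/
theorem interchangeable_iff_totally_compatible_of_idempotent {K A : Type*} [Field K]
    [NonUnitalRing A] [Module K A] [SMulCommClass K A A] [IsScalarTower K A A]
    (hAA : Submodule.span K {x : A | ∃ b c : A, x = b * c} = ⊤)
    (star : A →ₗ[K] A →ₗ[K] A)
    (hassoc : ∀ a b c : A, star (star a b) c = star a (star b c)) :
    ((∀ a b c : A, star a b * c = star (a * b) c) ∧
      (∀ a b c : A, star a (b * c) = a * star b c)) ↔
    (∀ a b c : A, star a b * c = star (a * b) c ∧ star (a * b) c = star a (b * c) ∧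
      star a (b * c) = a * star b c) := by
  constructor
  · rintro ⟨h1, h2⟩
    intro a b c
    refine ⟨h1 a b c, ?_, h2 a b c⟩
    rw [← h1 a b c, h2 a b c]
    have hb : b ∈ Submodule.span K {x : A | ∃ u v : A, x = u * v} :=
      hAA ▸ Submodule.mem_top
    induction hb using Submodule.span_induction with
    | mem x hx =>
      obtain ⟨u, v, rfl⟩ := hx
      calc star a (u * v) * c = (a * star u v) * c := by rw [h2]
        _ = a * (star u v * c) := mul_assoc _ _ _
        _ = a * star (u * v) c := by rw [h1]
    | zero => simp
    | add x y _ _ hx hy => simp only [map_add, LinearMap.add_apply, add_mul, mul_add, hx, hy]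
    | smul k x _ hx =>
      simp only [map_smul, LinearMap.smul_apply, smul_mul_assoc, mul_smul_comm, hx]
  · intro h
    exact ⟨fun a b c => (h a b c).1, fun a b c => (h a b c).2.2⟩
end

section
/- Let (A,·) be an associative algebra over a field K possessing a left unit (an element e with e·a = a for all a ∈ A) or a right unit (an element e with a·e = a for all a ∈ A). Then an associative bilinear product * on A is (12)-matching with · if and only if it is totally compatible with ·. -/
/-- For an associative algebra `(A, ·)` over a field `K` possessing a left unit or a
right unit, an associative bilinear product `*` on `A` is `(12)`-matching with `·` if
and only if `*` is totally compatible with `·`. -/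
theorem twelve_matching_iff_totally_compatible_of_one_sided_unit {K A : Type*} [Field K]
    [NonUnitalRing A] [Module K A] [SMulCommClass K A A] [IsScalarTower K A A]
    (hunit : (∃ e : A, ∀ a : A, e * a = a) ∨ (∃ e : A, ∀ a : A, a * e = a))
    (star : A →ₗ[K] A →ₗ[K] A)
    (hassoc : ∀ a b c : A, star (star a b) c = star a (star b c)) :
    ((∀ a b c : A, star a b * c = a * star b c) ∧
      (∀ a b c : A, star (a * b) c = star a (b * c))) ↔
    (∀ a b c : A, star a b * c = star (a * b) c ∧ star (a * b) c = star a (b * c) ∧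
      star a (b * c) = a * star b c) := by
  constructor
  · rintro ⟨h1, h2⟩ a b c
    have key : star a b * c = star (a * b) c := by
      rcases hunit with ⟨e, he⟩ | ⟨e, he⟩
      · -- left unit: star x y = star e x * y
        have L : ∀ x y : A, star x y = star e x * y := by
          intro x y
          have := h1 e x y
          rw [he] at this
          exact this.symm
        calc star a b * c = (star e a * b) * c := by rw [← L]
          _ = star e a * (b * c) := mul_assoc _ _ _
          _ = star a (b * c) := (L a (b * c)).symm
          _ = star (a * b) c := (h2 a b c).symm
      · -- right unit: star x y = x * star y e
        have L : ∀ x y : A, star x y = x * star y e := by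
          intro x y
          have := h1 x y e
          rw [he] at this
          exact this
        calc star a b * c = (a * star b e) * c := by rw [← L]
          _ = a * (star b e * c) := mul_assoc _ _ _
          _ = a * (b * star e c) := by rw [h1 b e c]
          _ = a * (b * (e * star c e)) := by rw [← L e c]
          _ = a * ((b * e) * star c e) := by rw [mul_assoc]
          _ = a * (b * star c e) := by rw [he]
          _ = (a * b) * star c e := (mul_assoc _ _ _).symm
          _ = star (a * b) c := (L (a * b) c).symm
    exact ⟨key, h2 a b c, ((h2 a b c).symm.trans key.symm).trans (h1 a b c)⟩
  · intro h
    exact ⟨fun a b c => ((h a b c).1.trans (h a b c).2.1).trans (h a b c).2.2,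
      fun a b c => (h a b c).2.1⟩
end

section
/- Let (A,·) be the semigroup K-algebra of the rectangular band I×J. A bilinear product * on A is an id-matching structure on (A,·) (i.e. * is associative and id-matching with ·) if and only if there exist scalars λ_{jk} ∈ K, for (j,k) ∈ J×I, such that e_{ij} * e_{kl} = λ_{jk} e_{il} for all (i,j),(k,l) ∈ I×J. -/
/-!
If `*` is id-matching with `·`, write `e_{ij} = e_{il₀} · e_{i₀j}` and `e_{kl} = e_{kl₀} · e_{kl}`;
moving the outer factors out of `*` gives `e_{ij} * e_{kl} = e_{il₀} · (e_{i₀j} * e_{kl₀}) · e_{kl}`.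
In the rectangular band algebra every sandwich `e_{il₀} · y · e_{kl}` equals `ε(y) e_{il}`, where `ε`
is the augmentation (sum of coordinates), so `λ_{jk} = ε(e_{i₀j} * e_{kl₀})` works.
Conversely, all three identities are trilinear, so it suffices to check them on basis vectors,
where they reduce to `λ_{jk} λ_{lm} = λ_{lm} λ_{jk}`.
-/

open Module

namespace LinearMap

variable {R M₁ M₂ M₃ N ι₁ ι₂ ι₃ : Type*} [CommSemiring R]
  [AddCommMonoid M₁] [AddCommMonoid M₂] [AddCommMonoid M₃] [AddCommMonoid N]
  [Module R M₁] [Module R M₂] [Module R M₃] [Module R N]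

theorem ext_basis₃ (b₁ : Basis ι₁ R M₁) (b₂ : Basis ι₂ R M₂) (b₃ : Basis ι₃ R M₃)
    {F G : M₁ →ₗ[R] M₂ →ₗ[R] M₃ →ₗ[R] N}
    (h : ∀ p q r, F (b₁ p) (b₂ q) (b₃ r) = G (b₁ p) (b₂ q) (b₃ r)) : F = G :=
  ext_basis b₁ b₂ fun p q => b₃.ext fun r => h p q r

theorem forall₃_of_basis (b₁ : Basis ι₁ R M₁) (b₂ : Basis ι₂ R M₂) (b₃ : Basis ι₃ R M₃)
    (F G : M₁ →ₗ[R] M₂ →ₗ[R] M₃ →ₗ[R] N)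
    (h : ∀ p q r, F (b₁ p) (b₂ q) (b₃ r) = G (b₁ p) (b₂ q) (b₃ r)) :
    ∀ x y z, F x y z = G x y z := by
  rw [ext_basis₃ b₁ b₂ b₃ h]
  exact fun _ _ _ => rfl

end LinearMap

namespace RectangularBand

variable {K A I J : Type*} [CommSemiring K] [NonUnitalSemiring A] [Module K A]
  [SMulCommClass K A A] [IsScalarTower K A A]
  (e : Basis (I × J) K A) (hmul : ∀ (i k : I) (j l : J), e (i, j) * e (k, l) = e (i, l))
include hmul

theorem basis_mul_mul_basis (i k : I) (j l : J) (y : A) :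
    e (i, j) * y * e (k, l) = e.sumCoords y • e (i, l) := by
  have h : LinearMap.mulRight K (e (k, l)) ∘ₗ LinearMap.mulLeft K (e (i, j)) =
      e.sumCoords.smulRight (e (i, l)) :=
    e.ext fun ⟨p, q⟩ => by
      simp only [LinearMap.comp_apply, LinearMap.mulLeft_apply, LinearMap.mulRight_apply,
        LinearMap.smulRight_apply, Basis.sumCoords_self_apply, one_smul, hmul]
  exact LinearMap.congr_fun h y

theorem star_basis_eq_of_idMatching (star : A →ₗ[K] A →ₗ[K] A)
    (hstar_mul : ∀ a b c : A, star a b * c = star a (b * c))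
    (hmul_star : ∀ a b c : A, star (a * b) c = a * star b c) (i₀ : I) (l₀ : J)
    (i k : I) (j l : J) :
    star (e (i, j)) (e (k, l)) = e.sumCoords (star (e (i₀, j)) (e (k, l₀))) • e (i, l) :=
  calc star (e (i, j)) (e (k, l))
      = star (e (i, l₀) * e (i₀, j)) (e (k, l₀) * e (k, l)) := by rw [hmul, hmul]
    _ = e (i, l₀) * star (e (i₀, j)) (e (k, l₀)) * e (k, l) := by
      rw [hmul_star, ← hstar_mul, mul_assoc]
    _ = _ := basis_mul_mul_basis e hmul i k l₀ l _

theorem idMatching_of_star_basis (star : A →ₗ[K] A →ₗ[K] A) (lam : J → I → K)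
    (hlam : ∀ (i k : I) (j l : J), star (e (i, j)) (e (k, l)) = lam j k • e (i, l)) :
    (∀ a b c : A, star (star a b) c = star a (star b c)) ∧
      (∀ a b c : A, star a b * c = star a (b * c)) ∧
      (∀ a b c : A, star (a * b) c = a * star b c) := by
  refine ⟨?_, ?_, ?_⟩
  · refine LinearMap.forall₃_of_basis e e e (star.compr₂ star)
      ((LinearMap.llcomp K A A A ∘ₗ star).compl₂ star) fun ⟨i, j⟩ ⟨k, l⟩ ⟨m, n⟩ => ?_
    simp [hlam, smul_smul, mul_comm]
  · refine LinearMap.forall₃_of_basis e e e (star.compr₂ (LinearMap.mul K A))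
      ((LinearMap.llcomp K A A A ∘ₗ star).compl₂ (LinearMap.mul K A))
      fun ⟨i, j⟩ ⟨k, l⟩ ⟨m, n⟩ => ?_
    simp [hlam, hmul]
  · refine LinearMap.forall₃_of_basis e e e ((LinearMap.mul K A).compr₂ star)
      ((LinearMap.llcomp K A A A ∘ₗ LinearMap.mul K A).compl₂ star)
      fun ⟨i, j⟩ ⟨k, l⟩ ⟨m, n⟩ => ?_
    simp [hlam, hmul]

end RectangularBand

/-- For the semigroup algebra `(A, ·)` of the rectangular band `I × J` over a field `K`,
a bilinear product `*` on `A` is an id-matching structure on `(A, ·)` (i.e. associative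
and id-matching with `·`) if and only if there are scalars `λ_{jk} ∈ K` with
`e_{ij} * e_{kl} = λ_{jk} • e_{il}` for all `(i,j), (k,l) ∈ I × J`. -/
theorem id_matching_structures_on_rectangular_band {K A I J : Type*} [Field K]
    [NonUnitalRing A] [Module K A] [SMulCommClass K A A] [IsScalarTower K A A]
    [Nonempty I] [Nonempty J]
    (e : Module.Basis (I × J) K A)
    (hmul : ∀ (i k : I) (j l : J), e (i, j) * e (k, l) = e (i, l))
    (star : A →ₗ[K] A →ₗ[K] A) :
    ((∀ a b c : A, star (star a b) c = star a (star b c)) ∧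
      (∀ a b c : A, star a b * c = star a (b * c)) ∧
      (∀ a b c : A, star (a * b) c = a * star b c)) ↔
    ∃ lam : J → I → K, ∀ (i k : I) (j l : J),
      star (e (i, j)) (e (k, l)) = lam j k • e (i, l) := by
  constructor
  · rintro ⟨-, hstar_mul, hmul_star⟩
    obtain ⟨i₀⟩ := ‹Nonempty I›
    obtain ⟨l₀⟩ := ‹Nonempty J›
    exact ⟨fun j k => e.sumCoords (star (e (i₀, j)) (e (k, l₀))),
      RectangularBand.star_basis_eq_of_idMatching e hmul star hstar_mul hmul_star i₀ l₀⟩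
  · rintro ⟨lam, hlam⟩
    exact RectangularBand.idMatching_of_star_basis e hmul star lam hlam
end

section
/- Let (A,·) be the semigroup K-algebra of the rectangular band I×J and let * be an associative bilinear product on A that is (12)-matching with ·. Then e_{ij} * e_{kl} = e_{il} * e_{il} for all (i,j),(k,l) ∈ I×J. -/
theorem star_eq_star_diag_of_rectangularBand {A I J : Type*} [Mul A] (e : I × J → A)
    (hmul : ∀ (i k : I) (j l : J), e (i, j) * e (k, l) = e (i, l)) (star : A → A → A)
    (hmatch : ∀ a b c : A, star (a * b) c = star a (b * c)) (i k : I) (j l : J) :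
    star (e (i, j)) (e (k, l)) = star (e (i, l)) (e (i, l)) :=
  calc star (e (i, j)) (e (k, l))
      = star (e (i, j) * e (i, j)) (e (k, l)) := by rw [hmul]
    _ = star (e (i, j)) (e (i, l)) := by rw [hmatch, hmul]
    _ = star (e (i, j)) (e (i, l) * e (i, l)) := by rw [hmul]
    _ = star (e (i, l)) (e (i, l)) := by rw [← hmatch, hmul]

theorem twelve_matching_rectangular_band_basis_products_general {K A I J : Type*} [Field K]
    [NonUnitalRing A] [Module K A]
    (e : Module.Basis (I × J) K A)
    (hmul : ∀ (i k : I) (j l : J), e (i, j) * e (k, l) = e (i, l))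
    (star : A →ₗ[K] A →ₗ[K] A)
    (hmatch2 : ∀ a b c : A, star (a * b) c = star a (b * c)) :
    ∀ (i k : I) (j l : J),
      star (e (i, j)) (e (k, l)) = star (e (i, l)) (e (i, l)) :=
  star_eq_star_diag_of_rectangularBand e hmul (fun a b => star a b) hmatch2

/-- For the semigroup algebra `(A, ·)` of the rectangular band `I × J` over a field `K`
and an associative bilinear product `*` on `A` that is `(12)`-matching with `·`, one has
`e_{ij} * e_{kl} = e_{il} * e_{il}` for all `(i,j), (k,l) ∈ I × J`. -/
theorem twelve_matching_rectangular_band_basis_products {K A I J : Type*} [Field K]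
    [NonUnitalRing A] [Module K A] [SMulCommClass K A A] [IsScalarTower K A A]
    [Nonempty I] [Nonempty J]
    (e : Module.Basis (I × J) K A)
    (hmul : ∀ (i k : I) (j l : J), e (i, j) * e (k, l) = e (i, l))
    (star : A →ₗ[K] A →ₗ[K] A)
    (hassoc : ∀ a b c : A, star (star a b) c = star a (star b c))
    (hmatch1 : ∀ a b c : A, star a b * c = a * star b c)
    (hmatch2 : ∀ a b c : A, star (a * b) c = star a (b * c)) :
    ∀ (i k : I) (j l : J),
      star (e (i, j)) (e (k, l)) = star (e (i, l)) (e (i, l)) :=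
  twelve_matching_rectangular_band_basis_products_general e hmul star hmatch2
end

section
/- Let (A,·) be the semigroup K-algebra of the rectangular band I×J. For every (i,j) ∈ I×J, the centralizer of e_{ij} in A (the set of a ∈ A with a·e_{ij} = e_{ij}·a) equals the direct sum of the one-dimensional subspace K·e_{ij} and the annihilator Ann(A); in particular K·e_{ij} ∩ Ann(A) = {0} and every a commuting with e_{ij} can be written uniquely as λe_{ij} + r with λ ∈ K and r ∈ Ann(A). -/
/-!
Writing `E = e (i, j)`, the multiplication rule gives `x * y = x * E * y` on basis vectors, hence
for all `x y` by bilinearity; so `x` annihilates `A` as soon as `x * E = 0 = E * x`. Moreover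
`E * x * E ∈ K ∙ E` for every `x`. If `a` commutes with `E`, then `a * E = E * a * E = c • E`
for some `c`, and `a - c • E` is killed by `E` on both sides, i.e. lies in `Ann(A)`. Since `E` is
a nonzero idempotent, `c • E ∈ Ann(A)` forces `c • E = c • E * E = 0`.
-/

section RectangularBand

variable {K A I J : Type*} [CommSemiring K] [NonUnitalSemiring A] [Module K A]

def IsRectangularBandBasis (e : Module.Basis (I × J) K A) : Prop :=
  ∀ (i k : I) (j l : J), e (i, j) * e (k, l) = e (i, l)

variable {e : Module.Basis (I × J) K A}

theorem IsRectangularBandBasis.isIdempotentElem (he : IsRectangularBandBasis e) (p : I × J) :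
    IsIdempotentElem (e p) :=
  he p.1 p.1 p.2 p.2

variable [SMulCommClass K A A] [IsScalarTower K A A]

theorem IsRectangularBandBasis.mul_eq_mul_mul (he : IsRectangularBandBasis e) (p : I × J)
    (x y : A) : x * y = x * e p * y := by
  have h : LinearMap.mul K A = LinearMap.mul K A ∘ₗ LinearMap.mulRight K (e p) :=
    LinearMap.ext_basis e e fun ⟨i, j⟩ ⟨k, l⟩ => by
      simp only [LinearMap.comp_apply, LinearMap.mulRight_apply, LinearMap.mul_apply']
      rw [he, he, he]
  exact LinearMap.congr_fun₂ h x y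

theorem IsRectangularBandBasis.annihilates_iff (he : IsRectangularBandBasis e) (p : I × J)
    (x : A) : (∀ b : A, x * b = 0 ∧ b * x = 0) ↔ x * e p = 0 ∧ e p * x = 0 := by
  refine ⟨fun h => ⟨(h _).1, (h _).2⟩, fun ⟨hxe, hex⟩ b => ⟨?_, ?_⟩⟩
  · rw [he.mul_eq_mul_mul p, hxe, zero_mul]
  · rw [he.mul_eq_mul_mul p, mul_assoc, hex, mul_zero]

theorem IsRectangularBandBasis.mul_mul_mem_span (he : IsRectangularBandBasis e) (p : I × J)
    (x : A) : e p * x * e p ∈ K ∙ e p := by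
  have h : (⊤ : Submodule K A) ≤
      Submodule.comap (LinearMap.mulRight K (e p) ∘ₗ LinearMap.mulLeft K (e p)) (K ∙ e p) := by
    rw [← e.span_eq, Submodule.span_le]
    rintro _ ⟨⟨k, l⟩, rfl⟩
    obtain ⟨i, j⟩ := p
    simp only [SetLike.mem_coe, Submodule.mem_comap, LinearMap.comp_apply,
      LinearMap.mulLeft_apply, LinearMap.mulRight_apply]
    rw [he, he]
    exact Submodule.mem_span_singleton_self _
  simpa using h (Submodule.mem_top (x := x))

theorem IsRectangularBandBasis.exists_mul_eq_smul_of_commute (he : IsRectangularBandBasis e)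
    (p : I × J) {a : A} (ha : a * e p = e p * a) : ∃ c : K, a * e p = c • e p := by
  obtain ⟨c, hc⟩ := Submodule.mem_span_singleton.mp (he.mul_mul_mem_span p a)
  refine ⟨c, ?_⟩
  rw [hc, ← ha, mul_assoc, (he.isIdempotentElem p).eq]

end RectangularBand

theorem centralizer_eq_span_oplus_annihilator_general {K A I J : Type*} [Field K]
    [NonUnitalRing A] [Module K A] [SMulCommClass K A A] [IsScalarTower K A A]
    (e : Module.Basis (I × J) K A)
    (hmul : ∀ (i k : I) (j l : J), e (i, j) * e (k, l) = e (i, l))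
    (i : I) (j : J) :
    (∀ (c : K) (r : A), (∀ b : A, r * b = 0 ∧ b * r = 0) → c • e (i, j) = r →
      c = 0 ∧ r = 0) ∧
    (∀ a : A, a * e (i, j) = e (i, j) * a ↔
      ∃! p : K × A, (∀ b : A, p.2 * b = 0 ∧ b * p.2 = 0) ∧
        a = p.1 • e (i, j) + p.2) := by
  have he : IsRectangularBandBasis e := hmul
  have hE := (he.isIdempotentElem (i, j)).eq
  have hE0 : e (i, j) ≠ 0 := e.ne_zero _
  refine ⟨?_, fun a => ⟨fun hcomm => ?_, ?_⟩⟩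
  · rintro c r hr rfl
    have hc : c • e (i, j) = 0 := by simpa [smul_mul_assoc, hE] using (hr (e (i, j))).1
    exact ⟨(smul_eq_zero.mp hc).resolve_right hE0, hc⟩
  · obtain ⟨c, hc⟩ := he.exists_mul_eq_smul_of_commute (i, j) hcomm
    have hr : ∀ b : A, (a - c • e (i, j)) * b = 0 ∧ b * (a - c • e (i, j)) = 0 :=
      (he.annihilates_iff (i, j) _).2
        ⟨by rw [sub_mul, hc, smul_mul_assoc, hE, sub_self],
          by rw [mul_sub, ← hcomm, hc, mul_smul_comm, hE, sub_self]⟩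
    refine ⟨(c, a - c • e (i, j)), ⟨hr, (add_sub_cancel _ _).symm⟩, ?_⟩
    rintro ⟨c', r'⟩ ⟨hr', rfl⟩
    have hcc : c' • e (i, j) = c • e (i, j) := by
      rw [← hc, add_mul, smul_mul_assoc, hE, ((he.annihilates_iff (i, j) r').1 hr').1, add_zero]
    obtain rfl := smul_left_injective K hE0 hcc
    simp
  · rintro ⟨⟨c, r⟩, ⟨hr, rfl⟩, -⟩
    obtain ⟨hrE, hEr⟩ := (he.annihilates_iff (i, j) r).1 hr
    simp only [add_mul, mul_add, smul_mul_assoc, mul_smul_comm, hE, hrE, hEr]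

/-- For the semigroup algebra `(A, ·)` of the rectangular band `I × J` over a field `K`,
the centralizer of `e_{ij}` in `A` is the direct sum of `K·e_{ij}` and the annihilator
`Ann(A)`: the intersection of `K·e_{ij}` and `Ann(A)` is trivial, and an element `a`
commutes with `e_{ij}` if and only if it can be written (uniquely) as `λ • e_{ij} + r`
with `λ ∈ K` and `r ∈ Ann(A)`. -/
theorem centralizer_eq_span_oplus_annihilator {K A I J : Type*} [Field K]
    [NonUnitalRing A] [Module K A] [SMulCommClass K A A] [IsScalarTower K A A]
    [Nonempty I] [Nonempty J]
    (e : Module.Basis (I × J) K A)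
    (hmul : ∀ (i k : I) (j l : J), e (i, j) * e (k, l) = e (i, l))
    (i : I) (j : J) :
    (∀ (c : K) (r : A), (∀ b : A, r * b = 0 ∧ b * r = 0) → c • e (i, j) = r →
      c = 0 ∧ r = 0) ∧
    (∀ a : A, a * e (i, j) = e (i, j) * a ↔
      ∃! p : K × A, (∀ b : A, p.2 * b = 0 ∧ b * p.2 = 0) ∧
        a = p.1 • e (i, j) + p.2) :=
  centralizer_eq_span_oplus_annihilator_general e hmul i j
end

section
/- Let (A,·) be the semigroup K-algebra of the rectangular band I×J. A bilinear product * on A is a (12)-matching structure on (A,·) (i.e. * is associative and (12)-matching with ·) if and only if * is associative and there exist λ ∈ K and elements r_{il} ∈ Ann(A), for (i,l) ∈ I×J, such that e_{ij} * e_{kl} = λe_{il} + r_{il} for all (i,j),(k,l) ∈ I×J. -/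
/-!
Let `ε` be the augmentation (sum of coordinates). It is multiplicative and
`e_{ij} x e_{mn} = ε(x) e_{in}`, so every `x ∈ e_{ij} A ∩ A e_{mn}` equals `ε(x) e_{in}`.
For a matching structure `*`, the identity `(a * b) c = a (b * c)` gives
`ε(e_p * e_q) = ε(e_q * e_r)` for all basis vectors, so `ε(e_p * e_q)` is a constant `λ`;
it also puts `(e_{ij} * e_{kl}) e_{mn}` and `e_{mn} (e_{ij} * e_{kl})` into such intersections,
whence `e_{ij} * e_{kl} - λ e_{il}` annihilates `A`. The identity `(ab) * c = a * (bc)` makes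
`e_{ij} * e_{kl}` depend on `(i, l)` only. The converse is checked on basis triples.
-/

namespace RectangularBandAlgebra

open Module

theorem trilinear_eq_of_basis {R M N : Type*} [CommSemiring R] [AddCommMonoid M] [Module R M]
    [AddCommMonoid N] [Module R N] {ι : Type*} (b : Basis ι R M)
    (f g : M →ₗ[R] M →ₗ[R] M →ₗ[R] N)
    (h : ∀ p q r, f (b p) (b q) (b r) = g (b p) (b q) (b r))
    (x y z : M) : f x y z = g x y z := by
  rw [b.ext fun p => b.ext fun q => b.ext fun r => h p q r]

variable {K A : Type*} [Field K] [NonUnitalRing A] [Module K A]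

section AnyBasis

variable {ι : Type*} (b : Basis ι K A)

theorem mul_eq_zero_of_mul_basis_eq_zero [SMulCommClass K A A] {x : A} (h : ∀ p, x * b p = 0)
    (y : A) : x * y = 0 :=
  LinearMap.congr_fun (b.ext (f₁ := LinearMap.mulLeft K x) (f₂ := 0) h) y

theorem mul_eq_zero_of_basis_mul_eq_zero [IsScalarTower K A A] {x : A} (h : ∀ p, b p * x = 0)
    (y : A) : y * x = 0 :=
  LinearMap.congr_fun (b.ext (f₁ := LinearMap.mulRight K x) (f₂ := 0) h) y

end AnyBasis

variable {I J : Type*} (e : Basis (I × J) K A)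

def IsRectangularBandBasis : Prop :=
  ∀ (i k : I) (j l : J), e (i, j) * e (k, l) = e (i, l)

noncomputable def augmentation : A →ₗ[K] K :=
  e.constr K fun _ => 1

@[simp]
theorem augmentation_basis (p : I × J) : augmentation e (e p) = 1 :=
  e.constr_basis K _ p

variable {e} (star : A →ₗ[K] A →ₗ[K] A)

theorem star_basis_eq (hmul : IsRectangularBandBasis e)
    (h2 : ∀ a b c : A, star (a * b) c = star a (b * c)) (i k k' : I) (j j' l : J) :
    star (e (i, j)) (e (k, l)) = star (e (i, j')) (e (k', l)) := by
  rw [← hmul i k' j' j, h2, hmul]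

variable [SMulCommClass K A A] [IsScalarTower K A A]

theorem augmentation_mul (hmul : IsRectangularBandBasis e) (x y : A) :
    augmentation e (x * y) = augmentation e x * augmentation e y := by
  have key : (LinearMap.mul K A).compr₂ (augmentation e) =
      (LinearMap.mul K K).compl₁₂ (augmentation e) (augmentation e) :=
    LinearMap.ext_basis e e fun ⟨i, j⟩ ⟨k, l⟩ => by simp [hmul _ _ _ _]
  exact LinearMap.congr_fun₂ key x y

theorem basis_mul_mul_basis (hmul : IsRectangularBandBasis e)
    (i : I) (j : J) (x : A) (m : I) (n : J) :
    e (i, j) * x * e (m, n) = augmentation e x • e (i, n) := by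
  have key : (LinearMap.mulRight K (e (m, n))).comp (LinearMap.mulLeft K (e (i, j))) =
      (augmentation e).smulRight (e (i, n)) :=
    e.ext fun ⟨k, l⟩ => by simp [hmul _ _ _ _]
  exact LinearMap.congr_fun key x

theorem eq_augmentation_smul_of_eq_mul (hmul : IsRectangularBandBasis e)
    {i : I} {j : J} {m : I} {n : J} {x y z : A}
    (hy : x = e (i, j) * y) (hz : x = z * e (m, n)) :
    x = augmentation e x • e (i, n) := by
  have hleft : e (i, j) * x = x := by rw [hy, ← mul_assoc, hmul]
  have hright : x * e (m, n) = x := by rw [hz, mul_assoc, hmul]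
  rw [← basis_mul_mul_basis hmul i j x m n, hleft, hright]

theorem augmentation_star_basis_eq (hmul : IsRectangularBandBasis e)
    (h1 : ∀ a b c : A, star a b * c = a * star b c) (p q p' q' : I × J) :
    augmentation e (star (e p) (e q)) = augmentation e (star (e p') (e q')) := by
  have shift : ∀ p q r, augmentation e (star (e p) (e q)) = augmentation e (star (e q) (e r)) :=
    fun p q r => by
      simpa [augmentation_mul hmul] using congrArg (augmentation e) (h1 (e p) (e q) (e r))
  rw [shift p q p', shift q p' q']

theorem star_basis_mul_basis (hmul : IsRectangularBandBasis e)
    (h1 : ∀ a b c : A, star a b * c = a * star b c) (i k m : I) (j l n : J) :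
    star (e (i, j)) (e (k, l)) * e (m, n) =
      augmentation e (star (e (i, j)) (e (k, l))) • e (i, n) := by
  have h := eq_augmentation_smul_of_eq_mul hmul (h1 (e (i, j)) (e (k, l)) (e (m, n))) rfl
  rwa [augmentation_mul hmul, augmentation_basis, mul_one] at h

theorem basis_mul_star_basis (hmul : IsRectangularBandBasis e)
    (h1 : ∀ a b c : A, star a b * c = a * star b c) (i k m : I) (j l n : J) :
    e (m, n) * star (e (i, j)) (e (k, l)) =
      augmentation e (star (e (i, j)) (e (k, l))) • e (m, l) := by
  have h := eq_augmentation_smul_of_eq_mul hmul rfl (h1 (e (m, n)) (e (i, j)) (e (k, l))).symm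
  rwa [augmentation_mul hmul, augmentation_basis, one_mul] at h

theorem exists_smul_add_of_matching [Nonempty I] [Nonempty J]
    (hmul : IsRectangularBandBasis e)
    (h1 : ∀ a b c : A, star a b * c = a * star b c)
    (h2 : ∀ a b c : A, star (a * b) c = star a (b * c)) :
    ∃ (lam : K) (r : I → J → A),
      (∀ (i : I) (l : J), ∀ b : A, r i l * b = 0 ∧ b * r i l = 0) ∧
      ∀ (i k : I) (j l : J), star (e (i, j)) (e (k, l)) = lam • e (i, l) + r i l := by
  obtain ⟨i₀⟩ := ‹Nonempty I›
  obtain ⟨j₀⟩ := ‹Nonempty J›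
  set lam := augmentation e (star (e (i₀, j₀)) (e (i₀, j₀)))
  have hlam : ∀ p q, augmentation e (star (e p) (e q)) = lam := fun p q =>
    augmentation_star_basis_eq star hmul h1 p q _ _
  refine ⟨lam, fun i l => star (e (i, j₀)) (e (i₀, l)) - lam • e (i, l),
    fun i l b => ⟨mul_eq_zero_of_mul_basis_eq_zero e (fun ⟨m, n⟩ => ?_) b,
      mul_eq_zero_of_basis_mul_eq_zero e (fun ⟨m, n⟩ => ?_) b⟩, fun i k j l => ?_⟩
  · rw [sub_mul, star_basis_mul_basis star hmul h1, hlam, smul_mul_assoc, hmul, sub_self]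
  · rw [mul_sub, basis_mul_star_basis star hmul h1, hlam, mul_smul_comm, hmul, sub_self]
  · rw [star_basis_eq star hmul h2 i k i₀ j j₀ l, add_sub_cancel]

theorem star_mul_eq_mul_star_of_eq_smul_add
    (hmul : IsRectangularBandBasis e) {lam : K} {r : I → J → A}
    (hr : ∀ (i : I) (l : J), ∀ b : A, r i l * b = 0 ∧ b * r i l = 0)
    (hstar : ∀ (i k : I) (j l : J), star (e (i, j)) (e (k, l)) = lam • e (i, l) + r i l)
    (a b c : A) : star a b * c = a * star b c :=
  trilinear_eq_of_basis e (star.compr₂ (LinearMap.mul K A))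
    (((LinearMap.llcomp K A A A).comp (LinearMap.mul K A)).compl₂ star)
    (fun ⟨i, j⟩ ⟨k, l⟩ ⟨m, n⟩ => by
      change star _ _ * _ = _ * star _ _
      rw [hstar, hstar, add_mul, mul_add, smul_mul_assoc, mul_smul_comm, hmul, hmul,
        (hr i l _).1, (hr k n _).2])
    a b c

theorem star_mul_eq_star_mul_of_eq_smul_add
    (hmul : IsRectangularBandBasis e) {lam : K} {r : I → J → A}
    (hstar : ∀ (i k : I) (j l : J), star (e (i, j)) (e (k, l)) = lam • e (i, l) + r i l)
    (a b c : A) : star (a * b) c = star a (b * c) :=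
  trilinear_eq_of_basis e ((LinearMap.mul K A).compr₂ star)
    (((LinearMap.llcomp K A A A).comp star).compl₂ (LinearMap.mul K A))
    (fun ⟨i, j⟩ ⟨k, l⟩ ⟨m, n⟩ => by
      change star (_ * _) _ = star _ (_ * _)
      rw [hmul, hmul, hstar, hstar])
    a b c

end RectangularBandAlgebra

open RectangularBandAlgebra in
/-- For the semigroup algebra `(A, ·)` of the rectangular band `I × J` over a field `K`,
a bilinear product `*` on `A` is a `(12)`-matching structure on `(A, ·)` if and only if
`*` is associative and there exist `λ ∈ K` and elements `r_{il} ∈ Ann(A)` such that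
`e_{ij} * e_{kl} = λ • e_{il} + r_{il}` for all `(i,j), (k,l) ∈ I × J`. -/
theorem twelve_matching_structures_on_rectangular_band {K A I J : Type*} [Field K]
    [NonUnitalRing A] [Module K A] [SMulCommClass K A A] [IsScalarTower K A A]
    [Nonempty I] [Nonempty J]
    (e : Module.Basis (I × J) K A)
    (hmul : ∀ (i k : I) (j l : J), e (i, j) * e (k, l) = e (i, l))
    (star : A →ₗ[K] A →ₗ[K] A) :
    ((∀ a b c : A, star (star a b) c = star a (star b c)) ∧
      (∀ a b c : A, star a b * c = a * star b c) ∧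
      (∀ a b c : A, star (a * b) c = star a (b * c))) ↔
    ((∀ a b c : A, star (star a b) c = star a (star b c)) ∧
      ∃ (lam : K) (r : I → J → A),
        (∀ (i : I) (l : J), ∀ b : A, r i l * b = 0 ∧ b * r i l = 0) ∧
        ∀ (i k : I) (j l : J),
          star (e (i, j)) (e (k, l)) = lam • e (i, l) + r i l) := by
  constructor
  · rintro ⟨hassoc, h1, h2⟩
    exact ⟨hassoc, exists_smul_add_of_matching star hmul h1 h2⟩
  · rintro ⟨hassoc, lam, r, hr, hstar⟩
    exact ⟨hassoc, star_mul_eq_mul_star_of_eq_smul_add star hmul hr hstar,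
      star_mul_eq_star_mul_of_eq_smul_add star hmul hstar⟩
end

section
/- Let (A,·) be the semigroup K-algebra of the rectangular band I×J. A bilinear product * on A is a totally compatible structure on (A,·) (i.e. * is associative and totally compatible with ·) if and only if there exists λ ∈ K such that e_{ij} * e_{kl} = λe_{il} for all (i,j),(k,l) ∈ I×J. -/
/-!
Write `ε : A → K` for the linear form sending every basis vector to `1`. In the rectangular band
algebra every sandwich `e_{ij} · y · e_{kl}` equals `ε(y) e_{il}`. Total compatibility lets
factors of `·` move freely in and out of `*`, so after fixing `(i₀, j₀)` one gets
`e_{ij} * e_{kl} = e_{ij₀} · (e_{i₀j₀} * e_{i₀j₀}) · e_{i₀l}`, which is therefore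
`λ e_{il}` with `λ = ε(e_{i₀j₀} * e_{i₀j₀})`. Conversely `*` is then `λ` times the associative
product `·`, which is clearly totally compatible with it.
-/

open Module

section

variable {K A I J : Type*} [CommSemiring K] [NonUnitalSemiring A] [Module K A]

theorem star_eq_mul_star_mul_of_totallyCompatible {e : I × J → A}
    (hmul : ∀ (i k : I) (j l : J), e (i, j) * e (k, l) = e (i, l))
    {star : A →ₗ[K] A →ₗ[K] A}
    (hcomp : ∀ a b c : A, star a b * c = star (a * b) c ∧ star (a * b) c = star a (b * c) ∧
      star a (b * c) = a * star b c)
    (i₀ i k : I) (j₀ j l : J) :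
    star (e (i, j)) (e (k, l)) = e (i, j₀) * star (e (i₀, j₀)) (e (i₀, j₀)) * e (i₀, l) := by
  have mul_star (a b c : A) : a * star b c = star (a * b) c :=
    ((hcomp a b c).2.1.trans (hcomp a b c).2.2).symm
  have star_mul (a b c : A) : star a b * c = star a (b * c) :=
    (hcomp a b c).1.trans (hcomp a b c).2.1
  calc star (e (i, j)) (e (k, l))
      = star (e (i, j) * e (k, j₀)) (e (i₀, l)) := by rw [(hcomp _ _ _).2.1, hmul]
    _ = star (e (i, j₀) * e (i₀, j₀)) (e (i₀, j₀) * e (i₀, l)) := by rw [hmul, hmul, hmul]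
    _ = e (i, j₀) * star (e (i₀, j₀)) (e (i₀, j₀)) * e (i₀, l) := by rw [mul_star, star_mul]

variable [SMulCommClass K A A] [IsScalarTower K A A]

theorem rectangularBand_mul_mul_eq_smul (e : Basis (I × J) K A)
    (hmul : ∀ (i k : I) (j l : J), e (i, j) * e (k, l) = e (i, l))
    (i k : I) (j l : J) (y : A) :
    e (i, j) * y * e (k, l) = e.constr K (fun _ => (1 : K)) y • e (i, l) := by
  have key : (LinearMap.mulRight K (e (k, l))).comp (LinearMap.mulLeft K (e (i, j))) =
      (e.constr K fun _ => (1 : K)).smulRight (e (i, l)) :=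
    e.ext fun ⟨m, n⟩ => by simp [hmul]
  exact LinearMap.congr_fun key y

theorem exists_star_eq_smul_of_totallyCompatible [Nonempty I] [Nonempty J]
    (e : Basis (I × J) K A) (hmul : ∀ (i k : I) (j l : J), e (i, j) * e (k, l) = e (i, l))
    {star : A →ₗ[K] A →ₗ[K] A}
    (hcomp : ∀ a b c : A, star a b * c = star (a * b) c ∧ star (a * b) c = star a (b * c) ∧
      star a (b * c) = a * star b c) :
    ∃ lam : K, ∀ (i k : I) (j l : J), star (e (i, j)) (e (k, l)) = lam • e (i, l) := by
  obtain ⟨i₀⟩ := ‹Nonempty I›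
  obtain ⟨j₀⟩ := ‹Nonempty J›
  refine ⟨e.constr K (fun _ => (1 : K)) (star (e (i₀, j₀)) (e (i₀, j₀))), fun i k j l => ?_⟩
  rw [star_eq_mul_star_mul_of_totallyCompatible hmul hcomp i₀ i k j₀ j l,
    rectangularBand_mul_mul_eq_smul e hmul]

theorem eq_smul_mul_of_apply_basis_eq_smul (e : Basis (I × J) K A)
    (hmul : ∀ (i k : I) (j l : J), e (i, j) * e (k, l) = e (i, l))
    {star : A →ₗ[K] A →ₗ[K] A} {lam : K}
    (hstar : ∀ (i k : I) (j l : J), star (e (i, j)) (e (k, l)) = lam • e (i, l)) :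
    star = lam • LinearMap.mul K A :=
  e.ext fun ⟨i, j⟩ => e.ext fun ⟨k, l⟩ => by simp [hstar, hmul]

end

/-- For the semigroup algebra `(A, ·)` of the rectangular band `I × J` over a field `K`,
a bilinear product `*` on `A` is a totally compatible structure on `(A, ·)` (i.e.
associative and totally compatible with `·`) if and only if there exists `λ ∈ K` such
that `e_{ij} * e_{kl} = λ • e_{il}` for all `(i,j), (k,l) ∈ I × J`. -/
theorem totally_compatible_structures_on_rectangular_band {K A I J : Type*} [Field K]
    [NonUnitalRing A] [Module K A] [SMulCommClass K A A] [IsScalarTower K A A]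
    [Nonempty I] [Nonempty J]
    (e : Module.Basis (I × J) K A)
    (hmul : ∀ (i k : I) (j l : J), e (i, j) * e (k, l) = e (i, l))
    (star : A →ₗ[K] A →ₗ[K] A) :
    ((∀ a b c : A, star (star a b) c = star a (star b c)) ∧
      (∀ a b c : A, star a b * c = star (a * b) c ∧ star (a * b) c = star a (b * c) ∧
        star a (b * c) = a * star b c)) ↔
    ∃ lam : K, ∀ (i k : I) (j l : J),
      star (e (i, j)) (e (k, l)) = lam • e (i, l) := by
  refine ⟨fun ⟨_, hcomp⟩ => exists_star_eq_smul_of_totallyCompatible e hmul hcomp, ?_⟩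
  rintro ⟨lam, hstar⟩
  obtain rfl := eq_smul_mul_of_apply_basis_eq_smul e hmul hstar
  simp [smul_mul_assoc, mul_smul_comm, mul_assoc]
end

section
/- Let (A,·) be the semigroup K-algebra of the rectangular band I×J. Then the centroid of A is trivial: every K-linear map φ : A → A satisfying x·φ(y) = φ(x·y) = φ(x)·y for all x,y ∈ A is a scalar multiple of the identity map, i.e. φ = λ·id_A for some λ ∈ K. -/
/-!
Let `f = e (i₀, j₀)`. In the rectangular band `f * a * f` is a multiple of `f` for every `a`,
and `f` is idempotent, so any centroid map `T` satisfies `T f = T (f * f * f) = f * T f * f = λ • f`.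
Every basis vector factors through `f` as `e (i, j) = e (i, j₀) * f * e (i₀, j)`, whence
`T (e (i, j)) = e (i, j₀) * T f * e (i₀, j) = λ • e (i, j)`.
-/

namespace CentroidHom

variable {A : Type*} [NonUnitalNonAssocSemiring A]

theorem map_mul_mul (T : CentroidHom A) (x y z : A) : T (x * y * z) = x * T y * z := by
  rw [map_mul_right, map_mul_left]

theorem map_mul_mul_eq_smul {K : Type*} [Semiring K] [Module K A] [IsScalarTower K A A]
    [SMulCommClass K A A] (T : CentroidHom A) {f : A} (hf : IsIdempotentElem f) {c : K}
    (hc : f * T f * f = c • f) (x y : A) : T (x * f * y) = c • (x * f * y) := by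
  have hTf : T f = c • f := by
    calc T f = T (f * f * f) := by rw [hf.eq, hf.eq]
      _ = c • f := by rw [map_mul_mul, hc]
  rw [map_mul_mul, hTf, mul_smul_comm, smul_mul_assoc]

end CentroidHom

section RectangularBand

variable {K A I J : Type*} [CommSemiring K] [NonUnitalNonAssocSemiring A] [Module K A]
  (e : Module.Basis (I × J) K A) (hmul : ∀ (i k : I) (j l : J), e (i, j) * e (k, l) = e (i, l))
include hmul

theorem Module.Basis.mul_mul_eq_sumCoords_smul_of_rectangularBand
    [SMulCommClass K A A] [IsScalarTower K A A] (i : I) (j : J) (a : A) :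
    e (i, j) * a * e (i, j) = e.sumCoords a • e (i, j) := by
  have h : (LinearMap.mulRight K (e (i, j))).comp (LinearMap.mulLeft K (e (i, j)))
      = e.sumCoords.smulRight (e (i, j)) := by
    refine e.ext fun q => ?_
    simp [hmul, e.sumCoords_self_apply]
  exact LinearMap.congr_fun h a

theorem Module.Basis.eq_mul_mul_of_rectangularBand (i k : I) (j l : J) :
    e (i, l) = e (i, j) * e (k, j) * e (k, l) := by
  rw [hmul, hmul]

end RectangularBand

/-- The centroid of the semigroup algebra `(A, ·)` of a rectangular band `I × J` over a
field `K` is trivial: every `K`-linear map `φ : A → A` with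
`x·φ(y) = φ(x·y) = φ(x)·y` for all `x, y ∈ A` is a scalar multiple of the identity. -/
theorem centroid_of_rectangular_band_algebra_trivial {K A I J : Type*} [Field K]
    [NonUnitalRing A] [Module K A] [SMulCommClass K A A] [IsScalarTower K A A]
    [Nonempty I] [Nonempty J]
    (e : Module.Basis (I × J) K A)
    (hmul : ∀ (i k : I) (j l : J), e (i, j) * e (k, l) = e (i, l))
    (φ : A →ₗ[K] A)
    (hφ : ∀ x y : A, x * φ y = φ (x * y) ∧ φ (x * y) = φ x * y) :
    ∃ lam : K, ∀ a : A, φ a = lam • a := by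
  obtain ⟨i₀⟩ := ‹Nonempty I›
  obtain ⟨j₀⟩ := ‹Nonempty J›
  let T : CentroidHom A :=
    { φ.toAddMonoidHom with
      map_mul_left' := fun x y => (hφ x y).1.symm
      map_mul_right' := fun x y => (hφ x y).2 }
  set f := e (i₀, j₀)
  have hf : IsIdempotentElem f := hmul i₀ i₀ j₀ j₀
  have hc := e.mul_mul_eq_sumCoords_smul_of_rectangularBand hmul i₀ j₀ (T f)
  have hφ_eq : φ = e.sumCoords (T f) • LinearMap.id := by
    refine e.ext fun ⟨i, j⟩ => ?_
    rw [e.eq_mul_mul_of_rectangularBand hmul i i₀ j₀ j]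
    exact T.map_mul_mul_eq_smul hf hc _ _
  exact ⟨e.sumCoords (T f), fun a => by rw [hφ_eq]; rfl⟩
end

section
/- Let X be a nonempty set, K[X] the commutative polynomial K-algebra in the variables X, and K[X]⁺ the ideal of polynomials with zero constant term. A K-linear map φ : K[X]⁺ → K[X]⁺ belongs to the centroid of the non-unital algebra (K[X]⁺,·), i.e. satisfies a·φ(b) = φ(a·b) = φ(a)·b for all a,b ∈ K[X]⁺, if and only if there exists a polynomial p ∈ K[X] such that φ(a) = p·a for all a ∈ K[X]⁺. -/
/-- `K[X]⁺`: the non-unital subalgebra of the polynomial algebra `K[X]` consisting of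
the polynomials with zero constant term. -/
noncomputable def augmentationIdeal (K X : Type*) [Field K] :
    NonUnitalSubalgebra K (MvPolynomial X K) where
  carrier := {p | MvPolynomial.constantCoeff p = 0}
  add_mem' := by intro a b ha hb; simp_all [Set.mem_setOf_eq, map_add]
  mul_mem' := by intro a b ha hb; simp_all [Set.mem_setOf_eq, map_mul]
  smul_mem' := by intro c a ha; simp_all [Set.mem_setOf_eq]
  zero_mem' := by simp

private lemma X_dvd_of_coeff {K X : Type*} [Field K] (x₀ : X) (q : MvPolynomial X K)
    (h : ∀ m : X →₀ ℕ, m x₀ = 0 → MvPolynomial.coeff m q = 0) :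
    MvPolynomial.X x₀ ∣ q := by
  rw [MvPolynomial.X_dvd_iff_modMonomial_eq_zero]
  ext m
  by_cases hle : Finsupp.single x₀ 1 ≤ m
  · simp [MvPolynomial.coeff_modMonomial_of_le _ hle]
  · have hnle : ¬ Finsupp.single x₀ 1 ≤ m := hle
    rw [MvPolynomial.coeff_modMonomial_of_not_le _ hnle]
    have hm : m x₀ = 0 := by
      by_contra hx
      exact hnle (by rwa [Finsupp.single_le_iff, Nat.one_le_iff_ne_zero])
    simp [h m hm]

/-- A `K`-linear map `φ : K[X]⁺ → K[X]⁺` belongs to the centroid of the non-unital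
algebra `(K[X]⁺, ·)` if and only if it is multiplication by some polynomial
`p ∈ K[X]`. -/
theorem centroid_of_augmentation_ideal {K X : Type*} [Field K] [Nonempty X]
    (φ : augmentationIdeal K X →ₗ[K] augmentationIdeal K X) :
    (∀ a b : augmentationIdeal K X, a * φ b = φ (a * b) ∧ φ (a * b) = φ a * b) ↔
    ∃ p : MvPolynomial X K, ∀ a : augmentationIdeal K X,
      (φ a : MvPolynomial X K) = p * (a : MvPolynomial X K) := by
  classical
  constructor
  · intro h
    obtain ⟨x₀⟩ := ‹Nonempty X›
    have hXmem : ∀ y : X, (MvPolynomial.X y : MvPolynomial X K) ∈ augmentationIdeal K X := by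
      intro y
      show MvPolynomial.constantCoeff (MvPolynomial.X y) = 0
      simp
    set xp : augmentationIdeal K X := ⟨MvPolynomial.X x₀, hXmem x₀⟩ with hxp
    set q : MvPolynomial X K := (φ xp : MvPolynomial X K) with hq
    -- key identity
    have key : ∀ a : augmentationIdeal K X,
        MvPolynomial.X x₀ * (φ a : MvPolynomial X K) = q * (a : MvPolynomial X K) := by
      intro a
      have h1 := (h xp a).1
      have h2 := (h xp a).2
      have := h1.trans h2
      have : ((xp * φ a : augmentationIdeal K X) : MvPolynomial X K)
          = ((φ xp * a : augmentationIdeal K X) : MvPolynomial X K) := congrArg _ this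
      simpa using this
    -- q is divisible by X x₀
    have hq0 : MvPolynomial.constantCoeff q = 0 := (φ xp).2
    have hdvd : MvPolynomial.X x₀ ∣ q := by
      apply X_dvd_of_coeff
      intro m hm
      rcases eq_or_ne m 0 with rfl | hmne
      · simpa [MvPolynomial.constantCoeff_eq] using hq0
      · obtain ⟨y, hy⟩ := Finsupp.support_nonempty_iff.mpr hmne
        have hyx : m y ≠ 0 := Finsupp.mem_support_iff.mp hy
        have hyne : y ≠ x₀ := by rintro rfl; exact hyx hm
        have hk := key ⟨MvPolynomial.X y, hXmem y⟩
        have hc := congrArg (MvPolynomial.coeff (m + Finsupp.single y 1)) hk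
        rw [MvPolynomial.coeff_mul_X] at hc
        rw [MvPolynomial.coeff_X_mul'] at hc
        have hx0 : x₀ ∉ (m + Finsupp.single y 1).support := by
          simp [Finsupp.mem_support_iff, Finsupp.single_apply, hm, hyne]
        rw [if_neg hx0] at hc
        exact hc.symm
    obtain ⟨p, hp⟩ := hdvd
    refine ⟨p, fun a => ?_⟩
    have hX : (MvPolynomial.X x₀ : MvPolynomial X K) ≠ 0 := MvPolynomial.X_ne_zero x₀
    apply mul_left_cancel₀ hX
    rw [key a, hp]; ring
  · rintro ⟨p, hp⟩ a b
    constructor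
    · apply Subtype.ext
      show (a : MvPolynomial X K) * (φ b : MvPolynomial X K)
          = (φ (a * b) : MvPolynomial X K)
      rw [hp, hp]
      show (a : MvPolynomial X K) * (p * b) = p * ((a : MvPolynomial X K) * b)
      ring
    · apply Subtype.ext
      show (φ (a * b) : MvPolynomial X K)
          = (φ a : MvPolynomial X K) * (b : MvPolynomial X K)
      rw [hp, hp]
      show p * ((a : MvPolynomial X K) * b) = p * (a : MvPolynomial X K) * b
      ring
end
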